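/- Let f : ℝᵈ → ℝᵈ be differentiable with symmetric positive definite Jacobian satisfying mI ⪯ Df(u) ⪯ MI for all u, where 0 < m ≤ M. Then for all u₁ ≠ u₂, ⟨u₁-u₂, f(u₁)-f(u₂)⟩/‖f(u₁)-f(u₂)‖² ≥ m/M², and hence the iteration z⁽ⁱ⁺¹⁾ = z⁽ⁱ⁾ - η(f(z⁽ⁱ⁾) - y) converges to the unique solution of f(z) = y for any 0 < η < 2m/M². -/

import Mathlib

/-!
Symmetry of `Df` together with `0 ⪯ Df ⪯ M` bounds the operator norm of `Df` by `M`, so `f` is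
`M`-Lipschitz, and integrating `m ⪯ Df` along segments makes `f` `m`-strongly monotone. These two
bounds give `m ‖Δf‖² ≤ m M² ‖Δu‖² ≤ M² ⟪Δu, Δf⟫`, and they make `u ↦ u - η (f u - y)` a contraction
with factor `√(1 - 2ηm + η²M²) < 1` when `0 < η < 2m/M²`; Banach's fixed point theorem concludes.
-/

open RealInnerProductSpace Filter Topology

variable {E : Type*} [NormedAddCommGroup E] [InnerProductSpace ℝ E]

theorem ContinuousLinearMap.opNorm_le_of_abs_inner_map_self_le {A : E →L[ℝ] E}
    (hA : (A : E →ₗ[ℝ] E).IsSymmetric) {M : ℝ} (hM : 0 ≤ M)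
    (hbound : ∀ v, |⟪v, A v⟫| ≤ M * ‖v‖ ^ 2) : ‖A‖ ≤ M := by
  rw [A.norm_eq_iSup_rayleighQuotient hA]
  refine ciSup_le fun v => ?_
  rw [rayleighQuotient, reApplyInnerSelf_apply, abs_div, abs_sq, real_inner_comm]
  exact div_le_of_le_mul₀ (sq_nonneg _) hM (hbound v)

def IsStronglyMonotone (m : ℝ) (g : E → E) : Prop :=
  ∀ x y, m * ‖x - y‖ ^ 2 ≤ ⟪x - y, g x - g y⟫

theorem isStronglyMonotone_of_le_inner_fderiv {f : E → E} {m : ℝ} (hf : Differentiable ℝ f)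
    (hlower : ∀ u v, m * ‖v‖ ^ 2 ≤ ⟪v, fderiv ℝ f u v⟫) : IsStronglyMonotone m f := by
  intro x y
  set v := x - y
  have hline : ∀ t : ℝ, HasDerivAt (fun t : ℝ => ⟪v, f (y + t • v)⟫)
      ⟪v, fderiv ℝ f (y + t • v) v⟫ t := by
    intro t
    have hpath : HasDerivAt (fun t : ℝ => y + t • v) v t := by
      simpa using ((hasDerivAt_id t).smul_const v).const_add y
    exact (innerSL ℝ v).hasFDerivAt.comp_hasDerivAt t
      ((hf _).hasFDerivAt.comp_hasDerivAt t hpath)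
  have := mul_sub_le_image_sub_of_le_deriv (fun t => (hline t).differentiableAt)
    (fun t => (hline t).deriv ▸ hlower (y + t • v) v) zero_le_one
  simpa [v, inner_sub_right] using this

theorem norm_sub_smul_sq_le {m M η : ℝ} {v w : E} (hmono : m * ‖v‖ ^ 2 ≤ ⟪v, w⟫)
    (hL : ‖w‖ ≤ M * ‖v‖) (hη : 0 ≤ η) :
    ‖v - η • w‖ ^ 2 ≤ (1 - 2 * η * m + η ^ 2 * M ^ 2) * ‖v‖ ^ 2 := by
  rw [norm_sub_sq_real, real_inner_smul_right, norm_smul, Real.norm_of_nonneg hη]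
  have : ‖w‖ ^ 2 ≤ (M * ‖v‖) ^ 2 := pow_le_pow_left₀ (norm_nonneg w) hL 2
  nlinarith [mul_le_mul_of_nonneg_left this (sq_nonneg η)]

namespace IsStronglyMonotone

variable {m M : ℝ} {g : E → E}

theorem mul_norm_le_norm_sub (hg : IsStronglyMonotone m g) (x y : E) :
    m * ‖x - y‖ ≤ ‖g x - g y‖ := by
  rcases (norm_nonneg (x - y)).eq_or_lt with h | h
  · rw [← h, mul_zero]; exact norm_nonneg _
  refine le_of_mul_le_mul_right ?_ h
  calc m * ‖x - y‖ * ‖x - y‖ = m * ‖x - y‖ ^ 2 := by ring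
    _ ≤ ⟪x - y, g x - g y⟫ := hg x y
    _ ≤ ‖x - y‖ * ‖g x - g y‖ := real_inner_le_norm _ _
    _ = ‖g x - g y‖ * ‖x - y‖ := mul_comm _ _

theorem div_sq_le_inner_div_norm_sq (hg : IsStronglyMonotone m g)
    (hL : ∀ x y, ‖g x - g y‖ ≤ M * ‖x - y‖) (hm : 0 < m) {x y : E} (hxy : x ≠ y) :
    m / M ^ 2 ≤ ⟪x - y, g x - g y⟫ / ‖g x - g y‖ ^ 2 := by
  have hd : 0 < ‖x - y‖ := norm_pos_iff.mpr (sub_ne_zero.mpr hxy)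
  have hlow := hg.mul_norm_le_norm_sub x y
  have hgd : 0 < ‖g x - g y‖ := (mul_pos hm hd).trans_le hlow
  have hM : 0 < M := pos_of_mul_pos_left (hgd.trans_le (hL x y)) hd.le
  rw [div_le_div_iff₀ (by positivity) (by positivity)]
  calc m * ‖g x - g y‖ ^ 2 ≤ m * (M * ‖x - y‖) ^ 2 := by gcongr; exact hL x y
    _ = m * ‖x - y‖ ^ 2 * M ^ 2 := by ring
    _ ≤ ⟪x - y, g x - g y⟫ * M ^ 2 := by gcongr; exact hg x y

theorem contractingWith_sub_smul (hg : IsStronglyMonotone m g)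
    (hL : ∀ x y, ‖g x - g y‖ ≤ M * ‖x - y‖) (hm : 0 < m) (hmM : m ≤ M) {η : ℝ} (hη : 0 < η)
    (hη' : η < 2 * m / M ^ 2) :
    ContractingWith (Real.toNNReal √(1 - 2 * η * m + η ^ 2 * M ^ 2)) (fun x => x - η • g x) := by
  have hM : 0 < M := hm.trans_le hmM
  set c := 1 - 2 * η * m + η ^ 2 * M ^ 2
  have hc₀ : 0 ≤ c := by
    nlinarith [sq_nonneg (1 - η * m), mul_le_mul_of_nonneg_left
      (pow_le_pow_left₀ hm.le hmM 2) (sq_nonneg η)]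
  have hc₁ : c < 1 := by
    have : η * M ^ 2 < 2 * m := by
      rwa [lt_div_iff₀ (by positivity)] at hη'
    nlinarith
  refine ⟨by simpa [Real.sqrt_lt' one_pos] using hc₁, LipschitzWith.of_dist_le_mul fun x y => ?_⟩
  have hstep : x - η • g x - (y - η • g y) = (x - y) - η • (g x - g y) := by
    rw [smul_sub]; abel
  rw [dist_eq_norm, dist_eq_norm, Real.coe_toNNReal _ (Real.sqrt_nonneg c), hstep,
    ← Real.sqrt_sq (norm_nonneg _), ← Real.sqrt_sq (norm_nonneg (x - y)), ← Real.sqrt_mul hc₀]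
  exact Real.sqrt_le_sqrt (norm_sub_smul_sq_le (hg x y) (hL x y) hη.le)

end IsStronglyMonotone

theorem isFixedPt_sub_smul_iff {g : E → E} {η : ℝ} (hη : η ≠ 0) {z : E} :
    Function.IsFixedPt (fun x => x - η • g x) z ↔ g z = 0 := by
  simp [Function.IsFixedPt, hη]

theorem ContractingWith.existsUnique_isFixedPt_tendsto_iterate {α : Type*} [MetricSpace α]
    [Nonempty α] [CompleteSpace α] {K : NNReal} {T : α → α} (hT : ContractingWith K T) :
    ∃! z, Function.IsFixedPt T z ∧ ∀ z₀, Tendsto (fun i => T^[i] z₀) atTop (𝓝 z) :=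
  ⟨fixedPoint T hT, ⟨hT.fixedPoint_isFixedPt, hT.tendsto_iterate_fixedPoint⟩,
    fun _ hz => hT.fixedPoint_unique hz.1⟩

theorem jacobian_bounds_convergence {d : ℕ}
    (f : EuclideanSpace ℝ (Fin d) → EuclideanSpace ℝ (Fin d))
    (m M : ℝ) (hm : 0 < m) (hmM : m ≤ M)
    (hdiff : Differentiable ℝ f)
    (hsymm : ∀ u v w : EuclideanSpace ℝ (Fin d),
      ⟪v, fderiv ℝ f u w⟫ = ⟪w, fderiv ℝ f u v⟫)
    (hlower : ∀ u v : EuclideanSpace ℝ (Fin d), m * ‖v‖ ^ 2 ≤ ⟪v, fderiv ℝ f u v⟫)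
    (hupper : ∀ u v : EuclideanSpace ℝ (Fin d), ⟪v, fderiv ℝ f u v⟫ ≤ M * ‖v‖ ^ 2) :
    (∀ u₁ u₂ : EuclideanSpace ℝ (Fin d), u₁ ≠ u₂ →
      m / M ^ 2 ≤ ⟪u₁ - u₂, f u₁ - f u₂⟫ / ‖f u₁ - f u₂‖ ^ 2) ∧
    ∀ y : EuclideanSpace ℝ (Fin d), ∀ η : ℝ, 0 < η → η < 2 * m / M ^ 2 →
      ∃! z : EuclideanSpace ℝ (Fin d), f z = y ∧
        ∀ z₀ : EuclideanSpace ℝ (Fin d),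
          Tendsto (fun i : ℕ => (fun u => u - η • (f u - y))^[i] z₀) atTop (𝓝 z) := by
  have hjac : ∀ u, ‖fderiv ℝ f u‖ ≤ M := fun u =>
    (fderiv ℝ f u).opNorm_le_of_abs_inner_map_self_le
      (fun v w => by rw [real_inner_comm]; exact hsymm u w v) (hm.le.trans hmM) fun v =>
      abs_le.mpr ⟨by nlinarith [hlower u v, sq_nonneg ‖v‖], hupper u v⟩
  have hL : ∀ x y, ‖f x - f y‖ ≤ M * ‖x - y‖ := fun x y =>
    convex_univ.norm_image_sub_le_of_norm_fderiv_le (fun u _ => hdiff u) (fun u _ => hjac u)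
      trivial trivial
  have hf : IsStronglyMonotone m f := isStronglyMonotone_of_le_inner_fderiv hdiff hlower
  refine ⟨fun u₁ u₂ => hf.div_sq_le_inner_div_norm_sq hL hm, fun y η hη hη' => ?_⟩
  have hg : IsStronglyMonotone m (fun u => f u - y) := by
    simpa [IsStronglyMonotone] using hf
  have hT := hg.contractingWith_sub_smul (by simpa using hL) hm hmM hη hη'
  simpa [isFixedPt_sub_smul_iff hη.ne', sub_eq_zero] using
    hT.existsUnique_isFixedPt_tendsto_iterate
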